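/- Let ε satisfy 0 < |ε| < 1 and let Φ_ε be the rational map Φ_ε(x,y) = ( (ε(ε+1)x² + εxy + (1−2ε)x)/D(x,y), (ε(2ε−4)x² − ε(ε+3)xy + 6εx − εy² + (2ε+1)y)/D(x,y) ), D(x,y) = 2ε²x² − ε(ε+1)x − εy + 2ε + 1. Consider the invariant conic C_{−2} = {(x,y) ∈ ℝ² : (2 − 5ε² + 4ε²)x² + 2xy + y² − 6x − 4y + 4 = 0} (the level curve of energy h = −2). Then (0,2) ∈ C_{−2} is a fixed point of Φ_ε, and for every point p ∈ C_{−2} whose entire forward orbit under Φ_ε is defined (i.e. D is nonzero along the orbit), the iterates Φ_εⁿ(p) converge to (0,2) as n → ∞. -/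

import Mathlib

/-- Denominator of the Kahan–Hirota–Kimura map `Φ_ε` of the system
`ẋ = x(x+y-2)`, `ẏ = -x(2x+y-3)`. -/
noncomputable def Dps (ε x y : ℝ) : ℝ :=
  2 * ε ^ 2 * x ^ 2 - ε * (ε + 1) * x - ε * y + 2 * ε + 1

/-- The Kahan–Hirota–Kimura map `Φ_ε` of the system `ẋ = x(x+y-2)`, `ẏ = -x(2x+y-3)`. -/
noncomputable def Phips (ε : ℝ) (q : ℝ × ℝ) : ℝ × ℝ :=
  ((ε * (ε + 1) * q.1 ^ 2 + ε * q.1 * q.2 + (1 - 2 * ε) * q.1) / Dps ε q.1 q.2,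
   (ε * (2 * ε - 4) * q.1 ^ 2 - ε * (ε + 3) * q.1 * q.2 + 6 * ε * q.1 - ε * q.2 ^ 2
      + (2 * ε + 1) * q.2) / Dps ε q.1 q.2)

/-- The invariant conic `C_h` of `Φ_ε`. -/
def Cps (ε h : ℝ) : Set (ℝ × ℝ) :=
  {q : ℝ × ℝ | (2 - 5 * ε ^ 2 - 2 * ε ^ 2 * h) * q.1 ^ 2 + 2 * q.1 * q.2 + q.2 ^ 2
      - 6 * q.1 - 4 * q.2 - 2 * h = 0}

/-!
Writing the conic `C_{-2}` as `(x + y - 2)² + (1 - ε²) x² = 2 x` shows that its points with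
`x → 0` tend to `(0, 2)`. Parametrising `C_{-2} \ {(0, 2)}` by the slope `v` of the line through
`(0, 2)`, the map `Φ_ε` becomes the translation `v ↦ v - 2ε`; so along an orbit `|v| → ∞`,
which forces `x = 2 / ((1 + v)² + 1 - ε²) → 0`.
-/

open Filter Topology Bornology

section

variable {ε : ℝ}

lemma mem_Cps_neg_two_iff {q : ℝ × ℝ} :
    q ∈ Cps ε (-2) ↔ (q.1 + q.2 - 2) ^ 2 + (1 - ε ^ 2) * q.1 ^ 2 = 2 * q.1 := by
  simp only [Cps, Set.mem_ofPred_eq]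
  constructor <;> intro h <;> linear_combination h

lemma zero_two_mem_Cps_neg_two : ((0 : ℝ), (2 : ℝ)) ∈ Cps ε (-2) := by
  rw [mem_Cps_neg_two_iff]
  ring

lemma Phips_zero_two : Phips ε ((0 : ℝ), (2 : ℝ)) = ((0 : ℝ), (2 : ℝ)) := by
  have hD : Dps ε 0 2 = 1 := by
    simp only [Dps]
    ring
  simp only [Phips, hD, Prod.mk.injEq]
  constructor <;> ring

lemma eq_zero_two_of_mem_Cps_neg_two {q : ℝ × ℝ} (hq : q ∈ Cps ε (-2)) (hx : q.1 = 0) :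
    q = ((0 : ℝ), (2 : ℝ)) := by
  rw [mem_Cps_neg_two_iff, hx] at hq
  have hy : q.2 = 2 := by nlinarith [sq_nonneg (q.2 - 2)]
  exact Prod.ext hx hy

lemma tendsto_zero_two_of_mem_Cps_neg_two {α : Type*} {l : Filter α} {f : α → ℝ × ℝ}
    (hε : ε ^ 2 ≤ 1) (hf : ∀ a, f a ∈ Cps ε (-2)) (hx : Tendsto (fun a ↦ (f a).1) l (𝓝 0)) :
    Tendsto f l (𝓝 ((0 : ℝ), (2 : ℝ))) := by
  have hbound : ∀ a, ‖(f a).1 + (f a).2 - 2‖ ≤ √(2 * (f a).1) := fun a ↦ by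
    have h := mem_Cps_neg_two_iff.mp (hf a)
    rw [Real.norm_eq_abs, ← Real.sqrt_sq_eq_abs]
    exact Real.sqrt_le_sqrt (by nlinarith [sq_nonneg (f a).1])
  have hsqrt : Tendsto (fun a ↦ √(2 * (f a).1)) l (𝓝 0) := by
    simpa using ((hx.const_mul 2).sqrt)
  have hsum : Tendsto (fun a ↦ (f a).1 + (f a).2 - 2) l (𝓝 0) :=
    squeeze_zero_norm hbound hsqrt
  have hy : Tendsto (fun a ↦ (f a).2) l (𝓝 2) := by
    convert (hsum.sub hx).add_const 2 using 2 <;> ring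
  exact hx.prodMk_nhds hy

/-- The second intersection point of `C_{-2}` with the line of slope `v` through `(0, 2)`. -/
noncomputable def conicParam (ε v : ℝ) : ℝ × ℝ :=
  (2 / ((1 + v) ^ 2 + 1 - ε ^ 2), 2 + 2 * v / ((1 + v) ^ 2 + 1 - ε ^ 2))

lemma conicParam_denom_pos (hε : ε ^ 2 < 1) (v : ℝ) : 0 < (1 + v) ^ 2 + 1 - ε ^ 2 := by
  nlinarith [sq_nonneg (1 + v)]

lemma conicParam_mem_Cps_neg_two (hε : ε ^ 2 < 1) (v : ℝ) : conicParam ε v ∈ Cps ε (-2) := by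
  have hs := (conicParam_denom_pos hε v).ne'
  rw [mem_Cps_neg_two_iff, conicParam]
  field_simp
  ring

lemma eq_conicParam_of_mem_Cps_neg_two (hε : ε ^ 2 < 1) {q : ℝ × ℝ} (hq : q ∈ Cps ε (-2))
    (hx : q.1 ≠ 0) : q = conicParam ε ((q.2 - 2) / q.1) := by
  set v := (q.2 - 2) / q.1
  have hv : q.2 = 2 + v * q.1 := by
    simp only [v]
    field_simp
    ring
  have hs := conicParam_denom_pos hε v
  have hxs : q.1 * ((1 + v) ^ 2 + 1 - ε ^ 2) = 2 := by
    rw [mem_Cps_neg_two_iff, hv] at hq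
    have h0 : q.1 * (q.1 * ((1 + v) ^ 2 + 1 - ε ^ 2) - 2) = 0 := by linear_combination hq
    linear_combination (mul_eq_zero.mp h0).resolve_left hx
  have hx' : q.1 = 2 / ((1 + v) ^ 2 + 1 - ε ^ 2) := by
    rw [eq_div_iff hs.ne']
    exact hxs
  refine Prod.ext hx' ?_
  rw [hv, hx', conicParam]
  ring

lemma Phips_conicParam (hε : ε ^ 2 < 1) {v : ℝ}
    (hD : Dps ε (conicParam ε v).1 (conicParam ε v).2 ≠ 0) :
    Phips ε (conicParam ε v) = conicParam ε (v - 2 * ε) := by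
  have hs := (conicParam_denom_pos hε v).ne'
  have hs' := (conicParam_denom_pos hε (v - 2 * ε)).ne'
  simp only [Phips, conicParam, Dps] at hD ⊢
  refine Prod.ext ?_ ?_
  · rw [div_eq_div_iff hD hs']
    field_simp
    ring
  · rw [add_div' _ _ _ hs', div_eq_div_iff hD hs']
    field_simp
    ring

lemma iterate_Phips_conicParam (hε : ε ^ 2 < 1) {v : ℝ}
    (hD : ∀ n : ℕ, Dps ε ((Phips ε)^[n] (conicParam ε v)).1
      ((Phips ε)^[n] (conicParam ε v)).2 ≠ 0) (n : ℕ) :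
    (Phips ε)^[n] (conicParam ε v) = conicParam ε (v - 2 * ε * n) := by
  induction n with
  | zero => simp
  | succ n ih =>
    rw [Function.iterate_succ_apply', ih, Phips_conicParam hε (ih ▸ hD n)]
    push_cast
    ring_nf

lemma tendsto_conicParam_cobounded (hε : ε ^ 2 < 1) :
    Tendsto (conicParam ε) (cobounded ℝ) (𝓝 ((0 : ℝ), (2 : ℝ))) := by
  refine tendsto_zero_two_of_mem_Cps_neg_two hε.le (conicParam_mem_Cps_neg_two hε) ?_
  have hnorm : Tendsto (fun v : ℝ ↦ ‖1 + v‖) (cobounded ℝ) atTop :=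
    tendsto_norm_atTop_iff_cobounded.mpr (tendsto_const_add_cobounded 1)
  have hdenom : Tendsto (fun v : ℝ ↦ (1 + v) ^ 2 + 1 - ε ^ 2) (cobounded ℝ) atTop := by
    simpa [add_sub_assoc, Real.norm_eq_abs, sq_abs] using
      tendsto_atTop_add_const_right _ (1 - ε ^ 2) ((tendsto_pow_atTop two_ne_zero).comp hnorm)
  exact tendsto_const_nhds.div_atTop hdenom

lemma tendsto_const_sub_mul_natCast_cobounded {𝕜 : Type*} [NormedDivisionRing 𝕜]
    [NormSMulClass ℤ 𝕜] (a : 𝕜) {b : 𝕜} (hb : b ≠ 0) :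
    Tendsto (fun n : ℕ ↦ a - b * n) atTop (cobounded 𝕜) :=
  (tendsto_const_sub_cobounded a).comp
    ((tendsto_mul_left_cobounded hb).comp tendsto_natCast_atTop_cobounded)

end

theorem stmt_5 (ε : ℝ) (hε0 : 0 < |ε|) (hε1 : |ε| < 1) :
    ((0 : ℝ), (2 : ℝ)) ∈ Cps ε (-2) ∧
    Phips ε ((0 : ℝ), (2 : ℝ)) = ((0 : ℝ), (2 : ℝ)) ∧
    ∀ q ∈ Cps ε (-2),
      (∀ n : ℕ, Dps ε ((Phips ε)^[n] q).1 ((Phips ε)^[n] q).2 ≠ 0) →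
      Filter.Tendsto (fun n : ℕ => (Phips ε)^[n] q) Filter.atTop
        (nhds ((0 : ℝ), (2 : ℝ))) := by
  have hε : ε ^ 2 < 1 := (sq_lt_one_iff_abs_lt_one ε).mpr hε1
  refine ⟨zero_two_mem_Cps_neg_two, Phips_zero_two, fun q hq hD ↦ ?_⟩
  by_cases hx : q.1 = 0
  · rw [eq_zero_two_of_mem_Cps_neg_two hq hx]
    simp only [Function.iterate_fixed Phips_zero_two]
    exact tendsto_const_nhds
  obtain ⟨v, rfl⟩ : ∃ v, q = conicParam ε v := ⟨_, eq_conicParam_of_mem_Cps_neg_two hε hq hx⟩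
  simp only [iterate_Phips_conicParam hε hD]
  exact (tendsto_conicParam_cobounded hε).comp
    (tendsto_const_sub_mul_natCast_cobounded v (mul_ne_zero two_ne_zero (abs_pos.mp hε0)))
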